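/- In the graph G' constructed from G (with two copies a_0, a_1 of each man a and a dummy woman d(a)), every stable matching M' of G' matches every dummy woman d(a); hence exactly one of a_0, a_1 is matched to d(a), and the image T(M') — obtained by deleting dummy edges and projecting a_i to a — is a valid matching of G. -/
import Mathlib


open Classical

/-- A bipartite graph `G = (A ∪ B, E)` with strict preference lists:
`adj` is the edge relation, and each vertex ranks its neighbors by a rank
function (lower rank = more preferred), injective on neighbors. -/
structure PrefSys (A B : Type) where
  adj : A → B → Prop
  rankA : A → B → ℕ
  rankB : B → A → ℕ
  rankA_inj : ∀ a b b', adj a b → adj a b' → rankA a b = rankA a b' → b = b'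
  rankB_inj : ∀ b a a', adj a b → adj a' b → rankB b a = rankB b a' → a = a'

namespace PrefSys

variable {A B : Type} (P : PrefSys A B)

/-- `M` is a matching of `G`: a set of edges, no two sharing a vertex. -/
def IsMatching (M : Finset (A × B)) : Prop :=
  (∀ p ∈ M, P.adj p.1 p.2) ∧
  (∀ p ∈ M, ∀ q ∈ M, p.1 = q.1 → p = q) ∧
  (∀ p ∈ M, ∀ q ∈ M, p.2 = q.2 → p = q)

/-- Vertex `a ∈ A` prefers matching `M` to matching `M'`:
`a` is matched in `M` and either unmatched in `M'` or matched to a strictly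
worse partner in `M'`. -/
def prefA (M M' : Finset (A × B)) (a : A) : Prop :=
  ∃ b, (a, b) ∈ M ∧ ∀ b', (a, b') ∈ M' → P.rankA a b < P.rankA a b'

/-- Vertex `b ∈ B` prefers matching `M` to matching `M'`. -/
def prefB (M M' : Finset (A × B)) (b : B) : Prop :=
  ∃ a, (a, b) ∈ M ∧ ∀ a', (a', b) ∈ M' → P.rankB b a < P.rankB b a'

/-- `φ(M, M')`: the number of vertices preferring `M` to `M'`. -/
noncomputable def phi (M M' : Finset (A × B)) : ℕ :=
  Nat.card {a : A // P.prefA M M' a} + Nat.card {b : B // P.prefB M M' b}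

/-- A matching is popular if it never loses a head-to-head election. -/
def Popular (M : Finset (A × B)) : Prop :=
  P.IsMatching M ∧ ∀ M', P.IsMatching M' → P.phi M' M ≤ P.phi M M'

/-- `a`'s vote on the edge `(a,b)` versus its `M`-partner is `+`. -/
def voteAplus (M : Finset (A × B)) (a : A) (b : B) : Prop :=
  ∀ b', (a, b') ∈ M → P.rankA a b < P.rankA a b'

/-- `b`'s vote on the edge `(a,b)` versus its `M`-partner is `+`. -/
def voteBplus (M : Finset (A × B)) (a : A) (b : B) : Prop :=
  ∀ a', (a', b) ∈ M → P.rankB b a < P.rankB b a'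

/-- `(a,b)` is a blocking edge (an edge outside `M` labeled `(+,+)`). -/
def Blocking (M : Finset (A × B)) (a : A) (b : B) : Prop :=
  P.adj a b ∧ (a, b) ∉ M ∧ P.voteAplus M a b ∧ P.voteBplus M a b

/-- A stable matching: a matching with no blocking edge. -/
def Stable (M : Finset (A × B)) : Prop :=
  P.IsMatching M ∧ ∀ a b, ¬ P.Blocking M a b

/-- A dominant matching: popular, and more popular than every larger matching. -/
def Dominant (M : Finset (A × B)) : Prop :=
  P.Popular M ∧ ∀ M', P.IsMatching M' → M.card < M'.card → P.phi M' M < P.phi M M'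

/-- The edge `(a,b)` survives in the subgraph `G_M` (i.e. it is an edge of `G`
that is in `M` or is not labeled `(-,-)`). -/
def inGM (M : Finset (A × B)) (a : A) (b : B) : Prop :=
  P.adj a b ∧ ((a, b) ∈ M ∨ P.voteAplus M a b ∨ P.voteBplus M a b)

end PrefSys

namespace PrefSys

/-- The auxiliary graph `G'` of `G`: men come in two copies `a₀` (`Sum.inl a`)
and `a₁` (`Sum.inr a`); women are the original women `b` (`Sum.inl b`) together
with a dummy woman `d(a)` (`Sum.inr a`) for each man `a`.  `d(a)` is adjacent
only to `a₀` and `a₁` and prefers `a₀`; `a₀` ranks `a`'s neighbors in `a`'s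
original order followed last by `d(a)`; `a₁` ranks `d(a)` first and then `a`'s
neighbors in original order; each woman `b` prefers every level-1 man to every
level-0 man, each level ordered by `b`'s original preferences. -/
noncomputable def aux {A B : Type} [Fintype A] [Fintype B] (P : PrefSys A B) :
    PrefSys (A ⊕ A) (B ⊕ A) where
  adj x y :=
    match x, y with
    | .inl a, .inl b => P.adj a b
    | .inl a, .inr a' => a' = a
    | .inr a, .inl b => P.adj a b
    | .inr a, .inr a' => a' = a
  rankA x y :=
    match x, y with
    | .inl a, .inl b => P.rankA a b
    | .inl a, .inr _ => (Finset.univ.sup (P.rankA a)) + 1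
    | .inr a, .inl b => P.rankA a b + 1
    | .inr _, .inr _ => 0
  rankB y x :=
    match y, x with
    | .inl b, .inl a => P.rankB b a + (Finset.univ.sup (P.rankB b)) + 1
    | .inl b, .inr a => P.rankB b a
    | .inr _, .inl _ => 0
    | .inr _, .inr _ => 1
  rankA_inj := by
    rintro (a | a) (b | a') (b' | a'') h1 h2 heq <;> dsimp only at h1 h2 heq ⊢
    · exact congrArg Sum.inl (P.rankA_inj a b b' h1 h2 heq)
    · exfalso
      have := Finset.le_sup (f := P.rankA a) (Finset.mem_univ b); omega
    · exfalso
      have := Finset.le_sup (f := P.rankA a) (Finset.mem_univ b'); omega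
    · rw [h1, h2]
    · exact congrArg Sum.inl (P.rankA_inj a b b' h1 h2 (by omega))
    · exfalso; omega
    · exfalso; omega
    · rw [h1, h2]
  rankB_inj := by
    rintro (b | a) (a' | a'') (a''' | a'''') h1 h2 heq <;> dsimp only at h1 h2 heq ⊢
    · exact congrArg Sum.inl (P.rankB_inj b a' a''' h1 h2 (by omega))
    · exfalso
      have := Finset.le_sup (f := P.rankB b) (Finset.mem_univ a''''); omega
    · exfalso
      have := Finset.le_sup (f := P.rankB b) (Finset.mem_univ a''); omega
    · exact congrArg Sum.inr (P.rankB_inj b a'' a'''' h1 h2 heq)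
    · rw [← h1, ← h2]
    · exfalso; omega
    · exfalso; omega
    · rw [← h1, ← h2]

/-- The projection of an edge of `G'` to an edge of `G` (dummy edges ↦ none). -/
def proj {A B : Type} : ((A ⊕ A) × (B ⊕ A)) → Option (A × B)
  | (.inl a, .inl b) => some (a, b)
  | (.inr a, .inl b) => some (a, b)
  | _ => none

/-- `T(M')`: delete the edges incident to dummy women and replace each edge
`(aᵢ, b)` with `b ∈ B` by `(a, b)`. -/
noncomputable def Tmap {A B : Type} (M' : Finset ((A ⊕ A) × (B ⊕ A))) :
    Finset (A × B) :=
  (M'.image proj).filterMap id (by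
    intro o o' x hx hx'
    rw [id] at hx hx'
    rw [Option.mem_def] at hx hx'
    rw [hx, hx'])

end PrefSys

lemma mem_Tmap {A B : Type} (M' : Finset ((A ⊕ A) × (B ⊕ A))) (a : A) (b : B) :
    (a, b) ∈ PrefSys.Tmap M' ↔
      (Sum.inl a, Sum.inl b) ∈ M' ∨ (Sum.inr a, Sum.inl b) ∈ M' := by
  simp only [PrefSys.Tmap, Finset.mem_filterMap, Finset.mem_image, id, Option.mem_def]
  constructor
  · rintro ⟨o, ⟨⟨x, y⟩, hxy, rfl⟩, ho⟩
    rcases x with a' | a' <;> rcases y with b' | a''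
    · simp only [PrefSys.proj, Option.some.injEq, Prod.mk.injEq] at ho
      obtain ⟨rfl, rfl⟩ := ho; exact Or.inl hxy
    · simp [PrefSys.proj] at ho
    · simp only [PrefSys.proj, Option.some.injEq, Prod.mk.injEq] at ho
      obtain ⟨rfl, rfl⟩ := ho; exact Or.inr hxy
    · simp [PrefSys.proj] at ho
  · rintro (h | h)
    · exact ⟨some (a, b), ⟨(Sum.inl a, Sum.inl b), h, rfl⟩, rfl⟩
    · exact ⟨some (a, b), ⟨(Sum.inr a, Sum.inl b), h, rfl⟩, rfl⟩

open PrefSys in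
/-- every stable matching `M'` of the auxiliary graph `G'`
matches every dummy woman `d(a)`, hence exactly one of `a₀, a₁` is matched to
`d(a)`, and the projection `T(M')` is a valid matching of `G`. -/
theorem aux_stable_matches_dummies {A B : Type} [Fintype A] [Fintype B]
    (P : PrefSys A B) (M' : Finset ((A ⊕ A) × (B ⊕ A)))
    (hM' : (P.aux).Stable M') :
    (∀ a : A, ∃ x, (x, Sum.inr a) ∈ M') ∧
    (∀ a : A, Xor' ((Sum.inl a, Sum.inr a) ∈ M') ((Sum.inr a, Sum.inr a) ∈ M')) ∧
    P.IsMatching (Tmap M') := by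
  obtain ⟨⟨hadj, hA, hB⟩, hblock⟩ := hM'
  -- Every dummy woman d(a) is matched.
  have hd : ∀ a : A, ∃ x, (x, Sum.inr a) ∈ M' := by
    intro a
    by_contra hnone
    push_neg at hnone
    apply hblock (Sum.inr a) (Sum.inr a)
    refine ⟨rfl, hnone _, ?_, ?_⟩
    · intro b' hb'
      rcases b' with b | a'
      · simp only [PrefSys.aux]; omega
      · exact absurd hb' (by
          have := hadj _ hb'
          simp only [PrefSys.aux] at this
          subst this
          exact hnone _)
    · intro x hx
      exact absurd hx (hnone _)
  refine ⟨hd, ?_, ?_, ?_, ?_⟩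
  · -- exactly one of a₀, a₁ is matched to d(a)
    intro a
    obtain ⟨x, hx⟩ := hd a
    have hadj' := hadj _ hx
    rcases x with a' | a' <;> simp only [PrefSys.aux] at hadj' <;> subst hadj'
    · refine Or.inl ⟨hx, fun h1 => ?_⟩
      have := hB _ hx _ h1 rfl
      simp at this
    · refine Or.inr ⟨hx, fun h0 => ?_⟩
      have := hB _ h0 _ hx rfl
      simp at this
  · -- edges of T(M') are edges of G
    rintro ⟨a, b⟩ hp
    rw [mem_Tmap] at hp
    rcases hp with h | h <;> exact hadj _ h
  · -- no two edges share a man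
    rintro ⟨a, b⟩ hp ⟨a', b'⟩ hq (rfl : a = a')
    rw [mem_Tmap] at hp hq
    -- d(a) is matched to inl a or inr a
    obtain ⟨z, hz⟩ := hd a
    have hadjz := hadj _ hz
    rcases hp with h | h <;> rcases hq with h' | h'
    · have heq := hA _ h _ h' rfl
      injection heq with h1 h2; injection h2 with h3; rw [h3]
    · exfalso
      rcases z with c | c <;> simp only [PrefSys.aux] at hadjz <;> subst hadjz
      · have heq := hA _ hz _ h rfl; injection heq with h1 h2; exact Sum.inr_ne_inl h2
      · have heq := hA _ hz _ h' rfl; injection heq with h1 h2; exact Sum.inr_ne_inl h2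
    · exfalso
      rcases z with c | c <;> simp only [PrefSys.aux] at hadjz <;> subst hadjz
      · have heq := hA _ hz _ h' rfl; injection heq with h1 h2; exact Sum.inr_ne_inl h2
      · have heq := hA _ hz _ h rfl; injection heq with h1 h2; exact Sum.inr_ne_inl h2
    · have heq := hA _ h _ h' rfl
      injection heq with h1 h2; injection h2 with h3; rw [h3]
  · -- no two edges share a woman
    rintro ⟨a, b⟩ hp ⟨a', b'⟩ hq (rfl : b = b')
    rw [mem_Tmap] at hp hq
    rcases hp with h | h <;> rcases hq with h' | h' <;>
      · have heq := hB _ h _ h' rfl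
        first
        | (injection heq with h1 h2; injection h1 with h3; rw [h3])
        | (exact absurd (congrArg Prod.fst heq) (by simp))
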